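/- arXiv:quant-ph/0301058 — 3 statements merged into one kernel-verified Lean document; each statement's English description precedes it below -/
import Mathlib

section
/- For every M ≥ 1 and every n ≥ 1, the set A_n is a closed convex cone in the real vector space of Hermitian 2M×2M complex matrices. -/
/-
`A_n` is the image of a convex cone under an `ℝ`-linear map: the block matrices `Γ` form the
cone of positive semidefinite matrices satisfying the homogeneous conditions (iv)–(v), and
conditions (i)–(iii) say that `ρ` is a fixed linear function of `Γ`. This gives closure under
sums and nonnegative multiples, and `ρ` is Hermitian because its diagonal blocks are sums of
diagonal blocks of `Γ`.

For closedness, note that `tr ρ = tr Γ` and that every entry of a positive semidefinite matrix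
is bounded by its trace (via its `2 × 2` principal minors). Hence the feasible `Γ` lying over a
compact set of `ρ`'s form a compact set, and a continuous map with this property has closed
image.
-/

open Matrix
open scoped ComplexOrder

noncomputable section

/-- A `2 × M` block matrix `ρ = [[A, B], [Bᴴ, D]]` (indexed by `Fin M ⊕ Fin M`) is
`2 × M` separable if it is a finite sum of Kronecker products `(x xᴴ) ⊗ (y yᴴ)`
with `x ∈ ℂ²`, `y ∈ ℂ^M`; in block form the Kronecker product `(x xᴴ) ⊗ (y yᴴ)` has
`(r, s)` block `x_r conj(x_s) • (y yᴴ)`. -/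
def Separable2xM (M : ℕ) (ρ : Matrix (Fin M ⊕ Fin M) (Fin M ⊕ Fin M) ℂ) : Prop :=
  ∃ (k : ℕ) (x : Fin k → Fin 2 → ℂ) (y : Fin k → Fin M → ℂ),
    ρ = ∑ i : Fin k,
      fromBlocks
        ((x i 0 * star (x i 0)) • vecMulVec (y i) (star (y i)))
        ((x i 0 * star (x i 1)) • vecMulVec (y i) (star (y i)))
        ((x i 1 * star (x i 0)) • vecMulVec (y i) (star (y i)))
        ((x i 1 * star (x i 1)) • vecMulVec (y i) (star (y i)))

/-- Conditions (i)–(v) on the blocks `Γ_{ij}` relative to `A`, `B`, `D`: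
`Γ_{ij}^{(a)} = (Γ i j).toBlocks₁₁`, `Γ_{ij}^{(b)} = (Γ i j).toBlocks₁₂`,
`Γ_{ij}^{(c)} = (Γ i j).toBlocks₂₁`, `Γ_{ij}^{(d)} = (Γ i j).toBlocks₂₂`. -/
def GammaLin (M n : ℕ) (A B D : Matrix (Fin M) (Fin M) ℂ)
    (Γ : ℕ → ℕ → Matrix (Fin M ⊕ Fin M) (Fin M ⊕ Fin M) ℂ) : Prop :=
  (∑ i ∈ Finset.range (n + 1), (Γ i i).toBlocks₁₁ = A) ∧
  (∑ i ∈ Finset.range (n + 1), (Γ i i).toBlocks₂₂ = D) ∧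
  (∑ i ∈ Finset.range n,
      (1 / 2 : ℂ) • ((Γ i (i + 1)).toBlocks₂₁ + (Γ i (i + 1)).toBlocks₁₂) = B) ∧
  (∑ i ∈ Finset.range (n + 1), ((Γ i i).toBlocks₂₁ - (Γ i i).toBlocks₁₂) = 0) ∧
  (∀ k, 1 ≤ k → k ≤ n →
    ∑ i ∈ Finset.range (n + 1 - k),
      ((Γ i (i + k)).toBlocks₂₁ - (Γ i (i + k)).toBlocks₁₂) = 0)

/-- The `(n+1) × (n+1)` block matrix `(Γ_{ij})_{i,j=0}^n` assembled into one matrix. -/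
def GammaSection (M n : ℕ) (Γ : ℕ → ℕ → Matrix (Fin M ⊕ Fin M) (Fin M ⊕ Fin M) ℂ) :
    Matrix (Fin (n + 1) × (Fin M ⊕ Fin M)) (Fin (n + 1) × (Fin M ⊕ Fin M)) ℂ :=
  Matrix.of fun p q => Γ p.1.val q.1.val p.2 q.2

/-- The set `G(ρ; n)` for `ρ = [[A, B], [Bᴴ, D]]`: positive semidefinite block matrices
`Γ = (Γ_{ij})_{i,j=0}^n` satisfying (i)–(v). -/
def GammaSet (M n : ℕ) (A B D : Matrix (Fin M) (Fin M) ℂ) :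
    Set (ℕ → ℕ → Matrix (Fin M ⊕ Fin M) (Fin M ⊕ Fin M) ℂ) :=
  {Γ | (GammaSection M n Γ).PosSemidef ∧ GammaLin M n A B D Γ}

/-- The cone `A_n = { ρ = [[A, B], [Bᴴ, D]] : G(ρ; n) ≠ ∅ }`. -/
def ASet (M n : ℕ) : Set (Matrix (Fin M ⊕ Fin M) (Fin M ⊕ Fin M) ℂ) :=
  {ρ | ∃ A B D : Matrix (Fin M) (Fin M) ℂ,
    ρ = fromBlocks A B Bᴴ D ∧ (GammaSet M n A B D).Nonempty}


open Finset

theorem isClosed_image_of_isCompact_inter_preimage {X Y : Type*} [TopologicalSpace X]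
    [TopologicalSpace Y] [CompactlyGeneratedSpace Y] [T2Space Y] {f : X → Y} {S : Set X}
    (hf : Continuous f) (hS : ∀ K, IsCompact K → IsCompact (S ∩ f ⁻¹' K)) :
    IsClosed (f '' S) :=
  CompactlyGeneratedSpace.isClosed fun K hK => by
    rw [← Set.image_inter_preimage]
    exact ((hS K hK).image hf).isClosed

section BlockContinuity

variable {X l m n o R : Type*} [TopologicalSpace X] [TopologicalSpace R]
  {A : X → Matrix (n ⊕ o) (l ⊕ m) R}

@[fun_prop]
theorem Continuous.matrix_toBlocks₁₁ (hA : Continuous A) : Continuous fun x => (A x).toBlocks₁₁ :=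
  hA.matrix_submatrix _ _

@[fun_prop]
theorem Continuous.matrix_toBlocks₁₂ (hA : Continuous A) : Continuous fun x => (A x).toBlocks₁₂ :=
  hA.matrix_submatrix _ _

@[fun_prop]
theorem Continuous.matrix_toBlocks₂₁ (hA : Continuous A) : Continuous fun x => (A x).toBlocks₂₁ :=
  hA.matrix_submatrix _ _

@[fun_prop]
theorem Continuous.matrix_toBlocks₂₂ (hA : Continuous A) : Continuous fun x => (A x).toBlocks₂₂ :=
  hA.matrix_submatrix _ _

end BlockContinuity

namespace Matrix

variable {ι 𝕜 : Type*} [RCLike 𝕜]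

theorem PosSemidef.norm_apply_sq_le {A : Matrix ι ι 𝕜} (hA : A.PosSemidef) (i j : ι) :
    ‖A i j‖ ^ 2 ≤ RCLike.re (A i i) * RCLike.re (A j j) := by
  have hdet := (RCLike.nonneg_iff.mp (hA.submatrix ![i, j]).det_nonneg).1
  have hji : A j i = star (A i j) := by simpa using (hA.isHermitian.apply j i).symm
  have hii := (RCLike.nonneg_iff.mp (hA.diag_nonneg (i := i))).2
  have hjj := (RCLike.nonneg_iff.mp (hA.diag_nonneg (i := j))).2
  rw [det_fin_two] at hdet
  simp only [submatrix_apply, cons_val_zero, cons_val_one, hji] at hdet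
  rw [RCLike.star_def, RCLike.mul_conj, map_sub, RCLike.mul_re, hii, hjj, ← RCLike.ofReal_pow,
    RCLike.ofReal_re] at hdet
  linarith

theorem PosSemidef.norm_apply_le_re_trace [Fintype ι] {A : Matrix ι ι 𝕜} (hA : A.PosSemidef)
    (i j : ι) : ‖A i j‖ ≤ RCLike.re A.trace := by
  have hdiag_nonneg : ∀ k, 0 ≤ RCLike.re (A k k) := fun k =>
    (RCLike.nonneg_iff.mp (hA.diag_nonneg (i := k))).1
  have hdiag_le : ∀ k, RCLike.re (A k k) ≤ RCLike.re A.trace := fun k => by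
    rw [trace, map_sum]
    exact single_le_sum (f := fun l => RCLike.re (A l l)) (fun l _ => hdiag_nonneg l) (mem_univ k)
  nlinarith [hA.norm_apply_sq_le i j, hdiag_nonneg i, hdiag_nonneg j, hdiag_le i, hdiag_le j,
    norm_nonneg (A i j)]

theorem isClosed_setOf_posSemidef [Fintype ι] : IsClosed {A : Matrix ι ι 𝕜 | A.PosSemidef} := by
  simp only [posSemidef_iff_dotProduct_mulVec, Set.ofPred_and, Set.ofPred_forall]
  exact (isClosed_eq (by fun_prop) continuous_id).inter
    (isClosed_iInter fun x => isClosed_le continuous_const (by fun_prop))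

theorem isCompact_setOf_forall_norm_apply_le {m n : Type*} (R : ℝ) :
    IsCompact {A : Matrix m n 𝕜 | ∀ i j, ‖A i j‖ ≤ R} := by
  have h : {A : Matrix m n 𝕜 | ∀ i j, ‖A i j‖ ≤ R} =
      Set.univ.pi fun _ => Set.univ.pi fun _ => Metric.closedBall 0 R := by
    ext A
    show _ ↔ ∀ i ∈ Set.univ, ∀ j ∈ Set.univ, A i j ∈ Metric.closedBall (0 : 𝕜) R
    simp
  rw [h]
  exact isCompact_univ_pi fun _ => isCompact_univ_pi fun _ => isCompact_closedBall 0 R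

end Matrix

section Gamma

variable {M n : ℕ} {Γ Γ' : ℕ → ℕ → Matrix (Fin M ⊕ Fin M) (Fin M ⊕ Fin M) ℂ}

/-- The matrix `ρ = [[A, B], [Bᴴ, D]]` whose blocks are given by conditions (i)–(iii). -/
def stateOfGamma (M n : ℕ) (Γ : ℕ → ℕ → Matrix (Fin M ⊕ Fin M) (Fin M ⊕ Fin M) ℂ) :
    Matrix (Fin M ⊕ Fin M) (Fin M ⊕ Fin M) ℂ :=
  let B := ∑ i ∈ range n, (1 / 2 : ℂ) • ((Γ i (i + 1)).toBlocks₂₁ + (Γ i (i + 1)).toBlocks₁₂)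
  fromBlocks (∑ i ∈ range (n + 1), (Γ i i).toBlocks₁₁) B Bᴴ
    (∑ i ∈ range (n + 1), (Γ i i).toBlocks₂₂)

/-- Conditions (iv) and (v); (iv) is the case `k = 0`. -/
def GammaBalanced (M n : ℕ) (Γ : ℕ → ℕ → Matrix (Fin M ⊕ Fin M) (Fin M ⊕ Fin M) ℂ) : Prop :=
  ∀ k ≤ n, ∑ i ∈ range (n + 1 - k), ((Γ i (i + k)).toBlocks₂₁ - (Γ i (i + k)).toBlocks₁₂) = 0

theorem gammaLin_iff {A B D : Matrix (Fin M) (Fin M) ℂ} :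
    GammaLin M n A B D Γ ↔ fromBlocks A B Bᴴ D = stateOfGamma M n Γ ∧ GammaBalanced M n Γ := by
  rw [stateOfGamma, fromBlocks_inj]
  constructor
  · rintro ⟨hA, hD, hB, h0, hk⟩
    refine ⟨⟨hA.symm, hB.symm, by rw [hB], hD.symm⟩, fun k hkn => ?_⟩
    rcases k.eq_zero_or_pos with rfl | hk0
    · simpa using h0
    · exact hk k hk0 hkn
  · rintro ⟨⟨rfl, rfl, -, rfl⟩, h⟩
    exact ⟨rfl, rfl, rfl, by simpa using h 0 n.zero_le, fun k _ hkn => h k hkn⟩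

theorem mem_ASet_iff {ρ : Matrix (Fin M ⊕ Fin M) (Fin M ⊕ Fin M) ℂ} :
    ρ ∈ ASet M n ↔ ∃ Γ, (GammaSection M n Γ).PosSemidef ∧ GammaBalanced M n Γ ∧
      stateOfGamma M n Γ = ρ := by
  constructor
  · rintro ⟨A, B, D, rfl, Γ, hΓ, hlin⟩
    obtain ⟨hρ, hbal⟩ := gammaLin_iff.mp hlin
    exact ⟨Γ, hΓ, hbal, hρ.symm⟩
  · rintro ⟨Γ, hΓ, hbal, rfl⟩
    exact ⟨_, _, _, rfl, Γ, hΓ, gammaLin_iff.mpr ⟨rfl, hbal⟩⟩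

theorem stateOfGamma_add :
    stateOfGamma M n (Γ + Γ') = stateOfGamma M n Γ + stateOfGamma M n Γ' := by
  ext (p | p) (q | q) <;>
    simp [stateOfGamma, Matrix.sum_apply, toBlocks₁₁, toBlocks₁₂, toBlocks₂₁, toBlocks₂₂,
      sum_add_distrib, mul_add] <;>
    ring

theorem stateOfGamma_smul (c : ℝ) :
    stateOfGamma M n ((c : ℂ) • Γ) = (c : ℂ) • stateOfGamma M n Γ := by
  ext (p | p) (q | q) <;>
    simp [stateOfGamma, Matrix.sum_apply, toBlocks₁₁, toBlocks₁₂, toBlocks₂₁, toBlocks₂₂,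
      mul_sum] <;>
    exact sum_congr rfl fun _ _ => by ring

theorem GammaBalanced.add (h : GammaBalanced M n Γ) (h' : GammaBalanced M n Γ') :
    GammaBalanced M n (Γ + Γ') := by
  intro k hk
  ext p q
  have e := congr_fun₂ (h k hk) p q
  have e' := congr_fun₂ (h' k hk) p q
  simp only [Matrix.sum_apply, Matrix.sub_apply, toBlocks₁₂, toBlocks₂₁, of_apply, Pi.add_apply,
    Matrix.add_apply, sum_add_distrib, Matrix.zero_apply, sum_sub_distrib] at e e' ⊢
  linear_combination e + e'

theorem GammaBalanced.smul (h : GammaBalanced M n Γ) (c : ℂ) : GammaBalanced M n (c • Γ) := by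
  intro k hk
  ext p q
  have e := congr_fun₂ (h k hk) p q
  simp only [Matrix.sum_apply, Matrix.sub_apply, toBlocks₁₂, toBlocks₂₁, of_apply, Pi.smul_apply,
    Matrix.smul_apply, smul_eq_mul, ← mul_sum, Matrix.zero_apply, sum_sub_distrib] at e ⊢
  linear_combination c * e

theorem posSemidef_diag_block_of_gammaSection (h : (GammaSection M n Γ).PosSemidef) {i : ℕ}
    (hi : i ≤ n) : (Γ i i).PosSemidef :=
  h.submatrix fun p => ((⟨i, Nat.lt_succ_of_le hi⟩ : Fin (n + 1)), p)

theorem isHermitian_stateOfGamma (h : ∀ i ≤ n, (Γ i i).IsHermitian) :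
    (stateOfGamma M n Γ).IsHermitian := by
  have hblocks (e : Fin M → Fin M ⊕ Fin M) :
      (∑ i ∈ range (n + 1), (Γ i i).submatrix e e).IsHermitian :=
    isSelfAdjoint_sum _ fun i hi => (h i (Nat.lt_succ_iff.mp (mem_range.mp hi))).submatrix e
  exact (hblocks Sum.inl).fromBlocks rfl (hblocks Sum.inr)

theorem stateOfGamma_apply_self (p : Fin M ⊕ Fin M) :
    stateOfGamma M n Γ p p = ∑ i ∈ range (n + 1), Γ i i p p := by
  cases p <;> simp [stateOfGamma, Matrix.sum_apply, toBlocks₁₁, toBlocks₂₂]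

theorem trace_stateOfGamma : (stateOfGamma M n Γ).trace = (GammaSection M n Γ).trace := by
  simp only [trace, diag_apply, stateOfGamma_apply_self, GammaSection, of_apply,
    Fintype.sum_prod_type]
  rw [sum_comm, Fin.sum_univ_eq_sum_range (fun i => ∑ p, Γ i i p p)]

def gammaOfSection
    (X : Matrix (Fin (n + 1) × (Fin M ⊕ Fin M)) (Fin (n + 1) × (Fin M ⊕ Fin M)) ℂ) :
    ℕ → ℕ → Matrix (Fin M ⊕ Fin M) (Fin M ⊕ Fin M) ℂ :=
  fun i j => X.submatrix (Fin.clamp i n, ·) (Fin.clamp j n, ·)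

theorem gammaSection_gammaOfSection
    (X : Matrix (Fin (n + 1) × (Fin M ⊕ Fin M)) (Fin (n + 1) × (Fin M ⊕ Fin M)) ℂ) :
    GammaSection M n (gammaOfSection X) = X := by
  ext ⟨i, p⟩ ⟨j, q⟩
  simp [GammaSection, gammaOfSection, Fin.clamp, Nat.min_eq_left (Nat.lt_succ_iff.mp i.isLt),
    Nat.min_eq_left (Nat.lt_succ_iff.mp j.isLt)]

theorem gammaOfSection_gammaSection {i j : ℕ} (hi : i ≤ n) (hj : j ≤ n) :
    gammaOfSection (GammaSection M n Γ) i j = Γ i j := by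
  ext p q
  simp [GammaSection, gammaOfSection, Fin.clamp, Nat.min_eq_left hi, Nat.min_eq_left hj]

theorem stateOfGamma_congr (h : ∀ i ≤ n, ∀ j ≤ n, Γ i j = Γ' i j) :
    stateOfGamma M n Γ = stateOfGamma M n Γ' := by
  have hdiag : ∀ i ∈ range (n + 1), Γ i i = Γ' i i := fun i hi =>
    have := Nat.lt_succ_iff.mp (mem_range.mp hi); h i this i this
  have hsup : ∀ i ∈ range n, Γ i (i + 1) = Γ' i (i + 1) := fun i hi =>
    have := mem_range.mp hi; h i this.le (i + 1) this
  simp +contextual only [stateOfGamma, hdiag, hsup]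

theorem gammaBalanced_congr (h : ∀ i ≤ n, ∀ j ≤ n, Γ i j = Γ' i j) :
    GammaBalanced M n Γ ↔ GammaBalanced M n Γ' := by
  refine forall₂_congr fun k hk => ?_
  have hsup : ∀ i ∈ range (n + 1 - k), Γ i (i + k) = Γ' i (i + k) := fun i hi =>
    have := mem_range.mp hi; h i (by omega) (i + k) (by omega)
  simp +contextual only [hsup]

def stateOfSection (M n : ℕ)
    (X : Matrix (Fin (n + 1) × (Fin M ⊕ Fin M)) (Fin (n + 1) × (Fin M ⊕ Fin M)) ℂ) :
    Matrix (Fin M ⊕ Fin M) (Fin M ⊕ Fin M) ℂ :=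
  stateOfGamma M n (gammaOfSection X)

def feasibleSections (M n : ℕ) :
    Set (Matrix (Fin (n + 1) × (Fin M ⊕ Fin M)) (Fin (n + 1) × (Fin M ⊕ Fin M)) ℂ) :=
  {X | X.PosSemidef ∧ GammaBalanced M n (gammaOfSection X)}

theorem ASet_eq_image : ASet M n = stateOfSection M n '' feasibleSections M n := by
  ext ρ
  rw [mem_ASet_iff]
  constructor
  · rintro ⟨Γ, hΓ, hbal, rfl⟩
    have h : ∀ i ≤ n, ∀ j ≤ n, gammaOfSection (GammaSection M n Γ) i j = Γ i j :=
      fun i hi j hj => gammaOfSection_gammaSection hi hj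
    exact ⟨GammaSection M n Γ, ⟨hΓ, (gammaBalanced_congr h).mpr hbal⟩, stateOfGamma_congr h⟩
  · rintro ⟨X, ⟨hX, hbal⟩, rfl⟩
    exact ⟨gammaOfSection X, by rwa [gammaSection_gammaOfSection], hbal, rfl⟩

@[fun_prop]
theorem continuous_gammaOfSection_apply (i j : ℕ) :
    Continuous fun X : Matrix (Fin (n + 1) × (Fin M ⊕ Fin M)) (Fin (n + 1) × (Fin M ⊕ Fin M)) ℂ =>
      gammaOfSection X i j :=
  continuous_id.matrix_submatrix _ _

theorem continuous_stateOfSection : Continuous (stateOfSection M n) := by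
  unfold stateOfSection stateOfGamma
  fun_prop

theorem isClosed_feasibleSections : IsClosed (feasibleSections M n) := by
  simp only [feasibleSections, GammaBalanced, Set.ofPred_and, Set.ofPred_forall]
  exact isClosed_setOf_posSemidef.inter <|
    isClosed_iInter fun k => isClosed_iInter fun _ => isClosed_eq (by fun_prop) continuous_const

theorem isClosed_ASet (M n : ℕ) : IsClosed (ASet M n) := by
  -- `Matrix` is a plain definition, so this instance is not found through the Pi type.
  have : CompactlyGeneratedSpace (Matrix (Fin M ⊕ Fin M) (Fin M ⊕ Fin M) ℂ) :=
    inferInstanceAs (CompactlyGeneratedSpace (_ → _ → ℂ))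
  rw [ASet_eq_image]
  refine isClosed_image_of_isCompact_inter_preimage continuous_stateOfSection fun K hK => ?_
  obtain ⟨R, hR⟩ := hK.bddAbove_image (f := fun ρ => ρ.trace.re) (by fun_prop)
  refine (isCompact_setOf_forall_norm_apply_le R).of_isClosed_subset
    (isClosed_feasibleSections.inter (hK.isClosed.preimage continuous_stateOfSection)) ?_
  rintro X ⟨⟨hX, -⟩, hXK⟩ u v
  calc ‖X u v‖ ≤ X.trace.re := hX.norm_apply_le_re_trace u v
    _ = (stateOfSection M n X).trace.re := by
      rw [stateOfSection, trace_stateOfGamma, gammaSection_gammaOfSection]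
    _ ≤ R := hR ⟨_, hXK, rfl⟩

end Gamma

section Cone

variable {M n : ℕ} {ρ σ : Matrix (Fin M ⊕ Fin M) (Fin M ⊕ Fin M) ℂ}

theorem isHermitian_of_mem_ASet (h : ρ ∈ ASet M n) : ρ.IsHermitian := by
  obtain ⟨Γ, hΓ, -, rfl⟩ := mem_ASet_iff.mp h
  exact isHermitian_stateOfGamma fun i hi =>
    (posSemidef_diag_block_of_gammaSection hΓ hi).isHermitian

theorem add_mem_ASet (hρ : ρ ∈ ASet M n) (hσ : σ ∈ ASet M n) : ρ + σ ∈ ASet M n := by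
  obtain ⟨Γ, hΓ, hbal, rfl⟩ := mem_ASet_iff.mp hρ
  obtain ⟨Γ', hΓ', hbal', rfl⟩ := mem_ASet_iff.mp hσ
  exact mem_ASet_iff.mpr ⟨Γ + Γ', hΓ.add hΓ', hbal.add hbal', stateOfGamma_add⟩

theorem smul_mem_ASet {c : ℝ} (hc : 0 ≤ c) (hρ : ρ ∈ ASet M n) : (c : ℂ) • ρ ∈ ASet M n := by
  obtain ⟨Γ, hΓ, hbal, rfl⟩ := mem_ASet_iff.mp hρ
  exact mem_ASet_iff.mpr
    ⟨(c : ℂ) • Γ, hΓ.smul (Complex.zero_le_real.mpr hc), hbal.smul _, stateOfGamma_smul c⟩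

end Cone

theorem ASet_isClosed_convexCone_general (M n : ℕ) :
    IsClosed (ASet M n) ∧
    (∀ ρ ∈ ASet M n, ρ.IsHermitian) ∧
    (∀ ρ ∈ ASet M n, ∀ σ ∈ ASet M n, ρ + σ ∈ ASet M n) ∧
    (∀ c : ℝ, 0 ≤ c → ∀ ρ ∈ ASet M n, (c : ℂ) • ρ ∈ ASet M n) :=
  ⟨isClosed_ASet M n, fun _ => isHermitian_of_mem_ASet, fun _ hρ _ hσ => add_mem_ASet hρ hσ,
    fun _ hc _ hρ => smul_mem_ASet hc hρ⟩

/-- For every `M ≥ 1` and `n ≥ 1`, `A_n` is a closed convex cone in the real vector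
space of Hermitian `2M × 2M` complex matrices: it consists of Hermitian matrices, is
closed, and is closed under addition and multiplication by nonnegative real scalars. -/
theorem ASet_isClosed_convexCone (M n : ℕ) (hM : 1 ≤ M) (hn : 1 ≤ n) :
    IsClosed (ASet M n) ∧
    (∀ ρ ∈ ASet M n, ρ.IsHermitian) ∧
    (∀ ρ ∈ ASet M n, ∀ σ ∈ ASet M n, ρ + σ ∈ ASet M n) ∧
    (∀ c : ℝ, 0 ≤ c → ∀ ρ ∈ ASet M n, (c : ℂ) • ρ ∈ ASet M n) :=
  ASet_isClosed_convexCone_general M n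
end
end

section
/- Let S, T ∈ M_M(ℂ) with T Hermitian. Then z^{-1} S† + T + z S ≥ 0 for all z ∈ ℂ with |z| = 1 if and only if for every n ≥ 0 the (n+1)×(n+1) block Toeplitz matrix whose (i,j) block (0 ≤ i, j ≤ n) equals T if i = j, S if i = j + 1, S† if j = i + 1, and 0 if |i − j| ≥ 2, is positive semidefinite. -/
open Matrix
open scoped ComplexOrder

noncomputable section

/-- The condition `|z|² P + z Q + z̄ Qᴴ + R ≥ 0` for all `z ∈ ℂ`. -/
def QuadPos (M : ℕ) (P Q R : Matrix (Fin M) (Fin M) ℂ) : Prop :=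
  ∀ z : ℂ,
    ((z * (starRingEnd ℂ) z) • P + z • Q + ((starRingEnd ℂ) z) • Qᴴ + R).PosSemidef

/-- The `(n+1) × (n+1)` block Toeplitz matrix with diagonal blocks `T`, blocks `S` at
`(i, j)` with `i = j + 1`, blocks `Sᴴ` at `(i, j)` with `j = i + 1`, and zero blocks
whenever `|i − j| ≥ 2`. -/
def ToeplitzSection (M n : ℕ) (T S : Matrix (Fin M) (Fin M) ℂ) :
    Matrix (Fin (n + 1) × Fin M) (Fin (n + 1) × Fin M) ℂ :=
  Matrix.of fun p q =>
    (if p.1.val = q.1.val then T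
     else if p.1.val = q.1.val + 1 then S
     else if q.1.val = p.1.val + 1 then Sᴴ
     else 0) p.2 q.2

/-!
Write the `n`-th section as `J ⊗ S + 1 ⊗ T + Jᵀ ⊗ Sᴴ`, where `J` is the lower shift on
`Fin (n + 1)`, and let `w(z) = (z̄ ^ p)ₚ`.

If `H(z) = z⁻¹ Sᴴ + T + z S ≥ 0` on the circle, average the positive semidefinite matrices
`w(ζ) w(ζ)ᴴ ⊗ H(ζ)` over the `(n + 2)`-th roots of unity `ζ`: the orthogonality relations
`∑ ζ ^ m = 0` for `0 < |m| < n + 2` leave exactly the three block diagonals, so the average is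
the `n`-th section.

Conversely, testing the `n`-th section against `w(z) ⊗ v` for `|z| = 1` gives
`n ⟪v, H(z) v⟫ + ⟪v, T v⟫ ≥ 0` for every `n`; divide by `n` and let `n → ∞`.
-/

open scoped Kronecker

namespace Matrix

variable {R : Type*}

def shiftMatrix [Zero R] [One R] (n : ℕ) : Matrix (Fin n) (Fin n) R :=
  of fun p q => if p.val = q.val + 1 then 1 else 0

theorem shiftMatrix_mulVec_zero [NonAssocSemiring R] {n : ℕ} (w : Fin (n + 1) → R) :
    (shiftMatrix (n + 1) *ᵥ w) 0 = 0 := by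
  simp [mulVec, dotProduct, shiftMatrix]

theorem shiftMatrix_mulVec_succ [NonAssocSemiring R] {n : ℕ} (w : Fin (n + 1) → R)
    (p : Fin n) : (shiftMatrix (n + 1) *ᵥ w) p.succ = w p.castSucc := by
  have hp : ∀ q : Fin (n + 1), ((p : ℕ) = q ↔ p.castSucc = q) := fun q => by
    simp [Fin.ext_iff]
  simp [mulVec, dotProduct, shiftMatrix, hp]

theorem dotProduct_shiftMatrix_mulVec [NonAssocSemiring R] {n : ℕ} (u w : Fin (n + 1) → R) :
    u ⬝ᵥ (shiftMatrix (n + 1) *ᵥ w) = ∑ p : Fin n, u p.succ * w p.castSucc := by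
  simp [dotProduct, Fin.sum_univ_succ, shiftMatrix_mulVec_succ, shiftMatrix_mulVec_zero]

theorem sum_kronecker [CommSemiring R] {ι l m n p : Type*} (s : Finset ι)
    (A : ι → Matrix l m R) (B : Matrix n p R) :
    (∑ i ∈ s, A i) ⊗ₖ B = ∑ i ∈ s, A i ⊗ₖ B := by
  ext
  simp [Matrix.sum_apply, Finset.sum_mul]

theorem star_dotProduct_kronecker_mulVec [CommSemiring R] [StarRing R] {l m : Type*}
    [Fintype l] [Fintype m] (A : Matrix l l R) (B : Matrix m m R) (u : l → R) (v : m → R) :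
    star (fun i : l × m => u i.1 * v i.2) ⬝ᵥ ((A ⊗ₖ B) *ᵥ fun i => u i.1 * v i.2) =
      (star u ⬝ᵥ (A *ᵥ u)) * (star v ⬝ᵥ (B *ᵥ v)) := by
  simp only [dotProduct, mulVec, Fintype.sum_prod_type, kroneckerMap_apply, Pi.star_apply,
    star_mul']
  rw [Finset.sum_mul_sum]
  refine Fintype.sum_congr _ _ fun a => Fintype.sum_congr _ _ fun b => ?_
  simp only [Finset.mul_sum, Finset.sum_mul]
  conv_rhs => rw [Finset.sum_comm]
  refine Fintype.sum_congr _ _ fun c => ?_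
  refine Fintype.sum_congr _ _ fun d => ?_
  ring

end Matrix

open Matrix

def geomVec {R : Type*} [Monoid R] (z : R) (n : ℕ) : Fin n → R := fun p => z ^ (p : ℕ)

@[simp]
theorem star_geomVec {R : Type*} [Monoid R] [StarMul R] (z : R) (n : ℕ) :
    star (geomVec z n) = geomVec (star z) n := by
  ext p
  simp [geomVec, star_pow]

section geomVec

variable {R : Type*} [CommSemiring R] {a b : R}

theorem geomVec_dotProduct_geomVec (hab : a * b = 1) (n : ℕ) :
    geomVec a n ⬝ᵥ geomVec b n = n := by
  simp [dotProduct, geomVec, ← mul_pow, hab]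

theorem geomVec_dotProduct_shiftMatrix_mulVec (hab : a * b = 1) (n : ℕ) :
    geomVec a (n + 1) ⬝ᵥ (shiftMatrix (n + 1) *ᵥ geomVec b (n + 1)) = n * a := by
  have hterm : ∀ p : ℕ, a ^ (p + 1) * b ^ p = a := fun p => by
    rw [pow_succ', mul_assoc, ← mul_pow, hab, one_pow, mul_one]
  simp [dotProduct_shiftMatrix_mulVec, geomVec, hterm]

theorem geomVec_dotProduct_transpose_shiftMatrix_mulVec (hab : a * b = 1) (n : ℕ) :
    geomVec a (n + 1) ⬝ᵥ ((shiftMatrix (n + 1))ᵀ *ᵥ geomVec b (n + 1)) = n * b := by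
  rw [dotProduct_mulVec, vecMul_transpose, dotProduct_comm,
    geomVec_dotProduct_shiftMatrix_mulVec (by rwa [mul_comm])]

end geomVec

section rootsOfUnity

variable {K : Type*} [Field K] {ω : K} {N : ℕ}

theorem IsPrimitiveRoot.sum_pow_zpow (hω : IsPrimitiveRoot ω N) (m : ℤ) :
    ∑ k ∈ Finset.range N, (ω ^ k) ^ m = if (N : ℤ) ∣ m then (N : K) else 0 := by
  have hcomm : ∀ k : ℕ, (ω ^ k) ^ m = (ω ^ m) ^ k := fun k => by
    rw [← zpow_natCast, ← _root_.zpow_mul, mul_comm, _root_.zpow_mul, zpow_natCast]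
  simp_rw [hcomm]
  split_ifs with hdvd
  · simp [(hω.zpow_eq_one_iff_dvd m).mpr hdvd]
  · have hne : ω ^ m ≠ 1 := fun h => hdvd ((hω.zpow_eq_one_iff_dvd m).mp h)
    have hN : (ω ^ m) ^ N = 1 := by
      rw [← zpow_natCast, ← _root_.zpow_mul, mul_comm, _root_.zpow_mul, zpow_natCast,
        hω.pow_eq_one, _root_.one_zpow]
    rw [geom_sum_eq hne, hN, sub_self, zero_div]

theorem IsPrimitiveRoot.sum_zpow_smul_vecMulVec_geomVec (hω : IsPrimitiveRoot ω N) (n : ℕ)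
    (d : ℤ) :
    ∑ k ∈ Finset.range N, (ω ^ k) ^ d • vecMulVec (geomVec (ω ^ k)⁻¹ n) (geomVec (ω ^ k) n) =
      (N : K) • of fun p q : Fin n => if (N : ℤ) ∣ (q - p + d : ℤ) then 1 else 0 := by
  ext p q
  have hterm : ∀ k ∈ Finset.range N, ((ω ^ k) ^ d • vecMulVec (geomVec (ω ^ k)⁻¹ n)
      (geomVec (ω ^ k) n)) p q = (ω ^ k) ^ (q - p + d : ℤ) := fun k hk => by
    have hω0 : ω ^ k ≠ 0 := pow_ne_zero _ (hω.ne_zero (by simp at hk; omega))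
    simp only [Matrix.smul_apply, vecMulVec_apply, geomVec, smul_eq_mul, inv_pow]
    rw [zpow_add₀ hω0, zpow_sub₀ hω0, zpow_natCast, zpow_natCast]
    field_simp
  rw [Matrix.sum_apply, Finset.sum_congr rfl hterm, hω.sum_pow_zpow]
  simp [Matrix.smul_apply]

end rootsOfUnity

theorem Complex.nonneg_of_forall_natCast_mul_add_nonneg {a c : ℂ}
    (h : ∀ n : ℕ, 0 ≤ n * c + a) : 0 ≤ c := by
  have hlim : Filter.Tendsto (fun n : ℕ => c + a / n) Filter.atTop (nhds c) := by
    simpa using tendsto_const_nhds.add (tendsto_const_div_atTop_nhds_zero_nat a)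
  refine ge_of_tendsto hlim (Filter.eventually_atTop.mpr ⟨1, fun n hn => ?_⟩)
  have hn0 : (n : ℂ) ≠ 0 := by exact_mod_cast (by omega : n ≠ 0)
  calc (0 : ℂ) ≤ (n : ℂ)⁻¹ * (n * c + a) := mul_nonneg (by positivity) (h n)
    _ = c + a / n := by field_simp

section ToeplitzSection

variable {M : ℕ} (T S : Matrix (Fin M) (Fin M) ℂ)

theorem toeplitzSection_eq_kronecker (n : ℕ) :
    ToeplitzSection M n T S =
      shiftMatrix (n + 1) ⊗ₖ S + 1 ⊗ₖ T + (shiftMatrix (n + 1))ᵀ ⊗ₖ Sᴴ := by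
  ext ⟨p, i⟩ ⟨q, j⟩
  simp only [ToeplitzSection, shiftMatrix, of_apply, Matrix.add_apply, kroneckerMap_apply,
    transpose_apply, one_apply, ← Fin.val_inj]
  split_ifs <;> first | omega | simp

variable {T S}

theorem isHermitian_of_isHermitian_toeplitzSection_zero
    (h : (ToeplitzSection M 0 T S).IsHermitian) : T.IsHermitian := by
  ext i j
  simpa [ToeplitzSection] using congrFun (congrFun h.eq (0, i)) (0, j)

variable (T S)

theorem dotProduct_toeplitzSection_mulVec_geomVec {z : ℂ} (hz : z * star z = 1) (n : ℕ)
    (v : Fin M → ℂ) :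
    star (fun i : Fin (n + 1) × Fin M => geomVec (star z) (n + 1) i.1 * v i.2) ⬝ᵥ
        (ToeplitzSection M n T S *ᵥ fun i => geomVec (star z) (n + 1) i.1 * v i.2) =
      n * (star v ⬝ᵥ ((star z • Sᴴ + T + z • S) *ᵥ v)) + star v ⬝ᵥ (T *ᵥ v) := by
  simp only [toeplitzSection_eq_kronecker, add_mulVec, dotProduct_add,
    star_dotProduct_kronecker_mulVec, star_geomVec, star_star, one_mulVec,
    geomVec_dotProduct_shiftMatrix_mulVec hz, geomVec_dotProduct_transpose_shiftMatrix_mulVec hz,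
    geomVec_dotProduct_geomVec hz, smul_mulVec, dotProduct_smul, smul_eq_mul]
  push_cast
  ring

theorem smul_toeplitzSection_eq_sum {n : ℕ} {ω : ℂ} (hω : IsPrimitiveRoot ω (n + 2)) :
    ((n + 2 : ℕ) : ℂ) • ToeplitzSection M n T S =
      ∑ k ∈ Finset.range (n + 2), vecMulVec (geomVec (ω ^ k)⁻¹ (n + 1)) (geomVec (ω ^ k) (n + 1))
        ⊗ₖ ((ω ^ k)⁻¹ • Sᴴ + T + ω ^ k • S) := by
  set P := fun k : ℕ => vecMulVec (geomVec (ω ^ k)⁻¹ (n + 1)) (geomVec (ω ^ k) (n + 1))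
  have hdvd : ∀ (p q : Fin (n + 1)) (d : ℤ), |d| ≤ 1 →
      (((n + 2 : ℕ) : ℤ) ∣ (q - p + d : ℤ) ↔ (q - p + d : ℤ) = 0) := fun p q d hd => by
    refine ⟨fun h => Int.eq_zero_of_abs_lt_dvd h ?_, fun h => h ▸ dvd_zero _⟩
    rw [abs_le] at hd
    rw [abs_lt]
    constructor <;> omega
  have hsub : ∑ k ∈ Finset.range (n + 2), ω ^ k • P k =
      ((n + 2 : ℕ) : ℂ) • shiftMatrix (n + 1) := by
    have h := hω.sum_zpow_smul_vecMulVec_geomVec (n + 1) 1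
    simp only [zpow_one] at h
    rw [h]; congr 1; ext p q
    simp only [of_apply, shiftMatrix, hdvd p q 1 le_rfl]
    split_ifs <;> first | rfl | omega
  have hdiag : ∑ k ∈ Finset.range (n + 2), P k = ((n + 2 : ℕ) : ℂ) • 1 := by
    have h := hω.sum_zpow_smul_vecMulVec_geomVec (n + 1) 0
    simp only [zpow_zero, one_smul] at h
    rw [h]; congr 1; ext p q
    simp only [of_apply, one_apply, hdvd p q 0 (by norm_num), ← Fin.val_inj]
    split_ifs <;> first | rfl | omega
  have hsup : ∑ k ∈ Finset.range (n + 2), (ω ^ k)⁻¹ • P k =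
      ((n + 2 : ℕ) : ℂ) • (shiftMatrix (n + 1))ᵀ := by
    have h := hω.sum_zpow_smul_vecMulVec_geomVec (n + 1) (-1)
    simp only [_root_.zpow_neg, zpow_one] at h
    rw [h]; congr 1; ext p q
    simp only [of_apply, transpose_apply, shiftMatrix, hdvd p q (-1) (by norm_num)]
    split_ifs <;> first | rfl | omega
  simp only [kronecker_add, kronecker_smul, ← smul_kronecker, Finset.sum_add_distrib,
    ← sum_kronecker]
  rw [hsub, hdiag, hsup, toeplitzSection_eq_kronecker, smul_add, smul_add, smul_kronecker,
    smul_kronecker, smul_kronecker]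
  abel

variable {T S}

theorem posSemidef_toeplitzSection_of_forall_norm_eq_one
    (h : ∀ z : ℂ, ‖z‖ = 1 → (z⁻¹ • Sᴴ + T + z • S).PosSemidef) (n : ℕ) :
    (ToeplitzSection M n T S).PosSemidef := by
  have hω := Complex.isPrimitiveRoot_exp (n + 2) (by omega)
  set ω := Complex.exp (2 * Real.pi * Complex.I / (n + 2 : ℕ))
  have hnorm : ∀ k : ℕ, ‖ω ^ k‖ = 1 := fun k => by
    rw [norm_pow, hω.norm'_eq_one (by omega), one_pow]
  have hsum : (((n + 2 : ℕ) : ℂ) • ToeplitzSection M n T S).PosSemidef := by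
    rw [smul_toeplitzSection_eq_sum T S hω]
    refine posSemidef_sum _ fun k _ => PosSemidef.kronecker ?_ (h _ (hnorm k))
    have hstar : star (geomVec (ω ^ k)⁻¹ (n + 1)) = geomVec (ω ^ k) (n + 1) := by
      rw [star_geomVec, star_inv₀, Complex.star_def, ← Complex.inv_eq_conj (hnorm k), inv_inv]
    simpa only [hstar] using posSemidef_vecMulVec_self_star (geomVec (ω ^ k)⁻¹ (n + 1))
  have hN : ((n + 2 : ℕ) : ℂ) ≠ 0 := by exact_mod_cast (by omega : n + 2 ≠ 0)
  have hscaled := hsum.smul (a := ((n + 2 : ℕ) : ℂ)⁻¹) (by positivity)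
  rwa [smul_smul, inv_mul_cancel₀ hN, one_smul] at hscaled

theorem posSemidef_trigPoly_of_forall_posSemidef_toeplitzSection
    (h : ∀ n, (ToeplitzSection M n T S).PosSemidef) {z : ℂ} (hz : ‖z‖ = 1) :
    (z⁻¹ • Sᴴ + T + z • S).PosSemidef := by
  have hinv : z⁻¹ = star z := Complex.inv_eq_conj hz
  have hzz : z * star z = 1 := by
    rw [← hinv, mul_inv_cancel₀ (norm_ne_zero_iff.mp (by rw [hz]; exact one_ne_zero))]
  have hT : T.IsHermitian := isHermitian_of_isHermitian_toeplitzSection_zero (h 0).isHermitian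
  rw [hinv]
  refine .of_dotProduct_mulVec_nonneg ?_ fun v => ?_
  · simp only [IsHermitian, conjTranspose_add, conjTranspose_smul, conjTranspose_conjTranspose,
      star_star, hT.eq]
    abel
  · refine Complex.nonneg_of_forall_natCast_mul_add_nonneg (a := star v ⬝ᵥ (T *ᵥ v)) fun n => ?_
    rw [← dotProduct_toeplitzSection_mulVec_geomVec T S hzz n v]
    exact (h n).dotProduct_mulVec_nonneg _

end ToeplitzSection

theorem trigPoly_posSemidef_iff_toeplitz_general (M : ℕ) (S T : Matrix (Fin M) (Fin M) ℂ) :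
    (∀ z : ℂ, ‖z‖ = 1 → (z⁻¹ • Sᴴ + T + z • S).PosSemidef) ↔
      ∀ n : ℕ, (ToeplitzSection M n T S).PosSemidef :=
  ⟨posSemidef_toeplitzSection_of_forall_norm_eq_one, fun h _ =>
    posSemidef_trigPoly_of_forall_posSemidef_toeplitzSection h⟩

/-- `z⁻¹ Sᴴ + T + z S ≥ 0` for all `z` on the unit circle iff every finite section of
the associated semi-infinite block Toeplitz operator is positive semidefinite. -/
theorem trigPoly_posSemidef_iff_toeplitz (M : ℕ) (S T : Matrix (Fin M) (Fin M) ℂ)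
    (hT : T.IsHermitian) :
    (∀ z : ℂ, ‖z‖ = 1 → (z⁻¹ • Sᴴ + T + z • S).PosSemidef) ↔
      ∀ n : ℕ, (ToeplitzSection M n T S).PosSemidef :=
  trigPoly_posSemidef_iff_toeplitz_general M S T
end
end

section
/- Let P, Q, R ∈ M_M(ℂ). Then |z|² P + z Q + z̄ Q† + R ≥ 0 for all z ∈ ℂ if and only if for every r ∈ ℝ and every n ≥ 0 the (n+1)×(n+1) block Toeplitz matrix whose (i,j) block (0 ≤ i, j ≤ n) equals R + r²P if i = j, rQ if i = j + 1, rQ† if j = i + 1, and 0 if |i − j| ≥ 2, is positive semidefinite. -/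
open Matrix
open scoped ComplexOrder

noncomputable section

/-! For `‖u‖ = 1`, the block Toeplitz matrix with blocks `T`, `S`, `Sᴴ` is the compression, to
trigonometric polynomials of degree `≤ n`, of multiplication by the matrix symbol
`T + u • S + star u • Sᴴ` on the unit circle. Sampling at the `N`-th roots of unity with `N ≥ n + 2`
is exact at these degrees, so the Toeplitz matrix is an average of congruences of values of the
symbol: a nonnegative symbol gives nonnegative Toeplitz matrices. Conversely, the geometric test
vectors `(ūⁱ x)ᵢ` give `x* T x + n · x* (T + u S + ū Sᴴ) x ≥ 0` for every `n`, so the symbol is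
nonnegative. Writing `z = r u` with `r = ‖z‖` turns `|z|² P + z Q + z̄ Qᴴ + R` into the symbol with
`T = R + r² P` and `S = r Q`. -/

open Finset

lemma sum_sum_ite_val_eq_add_one {R : Type*} [AddCommMonoid R] (n : ℕ) (f : ℕ → ℕ → R) :
    ∑ k : Fin (n + 1), ∑ i : Fin (n + 1), (if (i : ℕ) = k + 1 then f i k else 0)
      = ∑ k ∈ range n, f (k + 1) k := by
  have inner (k : ℕ) : ∑ i : Fin (n + 1), (if (i : ℕ) = k + 1 then f i k else 0)
      = if k < n then f (k + 1) k else 0 := by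
    rw [Fin.sum_univ_eq_sum_range (fun i => if i = k + 1 then f i k else 0), sum_ite_eq']
    simp
  rw [Fin.sum_univ_eq_sum_range (fun k => ∑ i : Fin (n + 1),
    if (i : ℕ) = k + 1 then f i k else 0), sum_range_succ]
  simp only [inner, lt_irrefl, if_false, add_zero]
  exact sum_congr rfl fun k hk => if_pos (mem_range.mp hk)

theorem IsPrimitiveRoot.sum_star_pow_mul_pow {ω : ℂ} {N : ℕ} (hω : IsPrimitiveRoot ω N)
    {i k : ℕ} (hi : i < N) (hk : k < N) :
    ∑ j ∈ range N, star (ω ^ j) ^ i * (ω ^ j) ^ k = if i = k then (N : ℂ) else 0 := by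
  have hN : N ≠ 0 := by omega
  have hω0 : ω ≠ 0 := hω.ne_zero hN
  have hstar : star ω = ω⁻¹ := (Complex.inv_eq_conj (hω.norm'_eq_one hN)).symm
  set ζ := ω⁻¹ ^ i * ω ^ k
  have term (j : ℕ) : star (ω ^ j) ^ i * (ω ^ j) ^ k = ζ ^ j := by
    rw [star_pow, hstar, mul_pow, ← pow_mul, ← pow_mul, ← pow_mul, ← pow_mul, mul_comm i,
      mul_comm k]
  simp only [term]
  split_ifs with h
  · simp [ζ, h, hω0]
  · have hζ : ζ ≠ 1 := by
      intro h1
      refine h (hω.pow_inj hi hk ?_)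
      rw [← mul_one (ω ^ i), ← h1, ← mul_assoc, inv_pow, mul_inv_cancel₀ (pow_ne_zero _ hω0),
        one_mul]
    have hζN : ζ ^ N = 1 := by
      rw [mul_pow, ← pow_mul, ← pow_mul, mul_comm i, mul_comm k, pow_mul, pow_mul, inv_pow,
        hω.pow_eq_one]
      simp
    rw [geom_sum_eq hζ, hζN, sub_self, zero_div]

lemma Matrix.PosSemidef.of_forall_add_nsmul {m : Type*} [Fintype m] {A B : Matrix m m ℂ}
    (h : ∀ n : ℕ, (B + n • A).PosSemidef) : A.PosSemidef := by
  have hA : A.IsHermitian := by simpa using (h 1).isHermitian.sub (h 0).isHermitian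
  refine posSemidef_iff_dotProduct_mulVec.mpr ⟨hA, fun x => ?_⟩
  have hre (n : ℕ) : 0 ≤ (star x ⬝ᵥ B *ᵥ x).re + n • (star x ⬝ᵥ A *ᵥ x).re := by
    simpa only [add_mulVec, smul_mulVec, dotProduct_add, dotProduct_smul, Complex.add_re,
      Complex.re_nsmul] using (Complex.nonneg_iff.mp ((h n).dotProduct_mulVec_nonneg x)).1
  refine Complex.nonneg_iff.mpr ⟨?_, (hA.im_star_dotProduct_mulVec_self x).symm⟩
  by_contra! hneg
  obtain ⟨n, hn⟩ := exists_nat_gt ((star x ⬝ᵥ B *ᵥ x).re / -(star x ⬝ᵥ A *ᵥ x).re)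
  rw [div_lt_iff₀ (neg_pos.mpr hneg)] at hn
  linarith [hre n, nsmul_eq_mul n (star x ⬝ᵥ A *ᵥ x).re]

lemma toeplitzSection_apply {M n : ℕ} (T S : Matrix (Fin M) (Fin M) ℂ)
    (p q : Fin (n + 1) × Fin M) :
    ToeplitzSection M n T S p q =
      (if (p.1 : ℕ) = q.1 then T p.2 q.2 else 0) + (if (p.1 : ℕ) = q.1 + 1 then S p.2 q.2 else 0)
        + (if (q.1 : ℕ) = p.1 + 1 then Sᴴ p.2 q.2 else 0) := by
  simp only [ToeplitzSection, of_apply]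
  split_ifs <;> first | omega | simp

def phaseColumn (M n : ℕ) (u : ℂ) : Matrix (Fin (n + 1) × Fin M) (Fin M) ℂ :=
  of fun p b => if p.2 = b then star u ^ (p.1 : ℕ) else 0

section phaseColumn

variable {M n : ℕ} {u : ℂ}

lemma phaseColumn_mul_mul_conjTranspose_apply (A : Matrix (Fin M) (Fin M) ℂ)
    (p q : Fin (n + 1) × Fin M) :
    (phaseColumn M n u * A * (phaseColumn M n u)ᴴ) p q
      = star u ^ (p.1 : ℕ) * A p.2 q.2 * u ^ (q.1 : ℕ) := by
  simp [phaseColumn, mul_apply, apply_ite (starRingEnd ℂ), ite_mul]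

lemma conjTranspose_phaseColumn_mul_mul_apply
    (X : Matrix (Fin (n + 1) × Fin M) (Fin (n + 1) × Fin M) ℂ) (a b : Fin M) :
    ((phaseColumn M n u)ᴴ * X * phaseColumn M n u) a b
      = ∑ k : Fin (n + 1), ∑ i : Fin (n + 1), u ^ (i : ℕ) * X (i, a) (k, b) * star u ^ (k : ℕ) := by
  simp [phaseColumn, mul_apply, apply_ite (starRingEnd ℂ), ite_mul, mul_ite,
    Fintype.sum_prod_type, sum_mul]

lemma conjTranspose_phaseColumn_mul_toeplitzSection_mul (hu : ‖u‖ = 1)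
    (T S : Matrix (Fin M) (Fin M) ℂ) :
    (phaseColumn M n u)ᴴ * ToeplitzSection M n T S * phaseColumn M n u
      = T + n • (T + u • S + star u • Sᴴ) := by
  have diag (i : ℕ) : u ^ i * star u ^ i = 1 := by
    rw [← mul_pow, Complex.star_def, Complex.mul_conj', hu]
    simp
  have sub (k : ℕ) : u ^ (k + 1) * star u ^ k = u := by rw [pow_succ', mul_assoc, diag, mul_one]
  have super (k : ℕ) : u ^ k * star u ^ (k + 1) = star u := by
    rw [pow_succ, ← mul_assoc, diag, one_mul]
  ext a b
  simp only [conjTranspose_phaseColumn_mul_mul_apply, toeplitzSection_apply, mul_add, add_mul,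
    mul_ite, ite_mul, mul_zero, zero_mul, sum_add_distrib, Fin.val_inj, sum_ite_eq', mem_univ,
    if_true, mul_right_comm _ _ (star u ^ _), diag, one_mul]
  rw [sum_sum_ite_val_eq_add_one n (fun i k => u ^ i * star u ^ k * S a b), sum_comm,
    sum_sum_ite_val_eq_add_one n (fun k i => u ^ i * star u ^ k * Sᴴ a b)]
  simp only [sub, super, sum_const, card_range, card_univ, Fintype.card_fin, Matrix.add_apply,
    Matrix.smul_apply, smul_eq_mul]
  simp only [nsmul_eq_mul]
  push_cast
  ring

lemma sum_phaseColumn_mul_mul_conjTranspose {N : ℕ} {ω : ℂ} (hω : IsPrimitiveRoot ω N)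
    (hn : n + 1 < N) (T S : Matrix (Fin M) (Fin M) ℂ) :
    ∑ j ∈ range N, phaseColumn M n (ω ^ j) * (T + ω ^ j • S + star (ω ^ j) • Sᴴ)
        * (phaseColumn M n (ω ^ j))ᴴ = (N : ℂ) • ToeplitzSection M n T S := by
  ext ⟨i, a⟩ ⟨k, b⟩
  have split (u : ℂ) : star u ^ (i : ℕ) * (T + u • S + star u • Sᴴ) a b * u ^ (k : ℕ)
      = star u ^ (i : ℕ) * u ^ (k : ℕ) * T a b + star u ^ (i : ℕ) * u ^ ((k : ℕ) + 1) * S a b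
        + star u ^ ((i : ℕ) + 1) * u ^ (k : ℕ) * Sᴴ a b := by
    simp only [Matrix.add_apply, Matrix.smul_apply, smul_eq_mul]
    ring
  have orth (i' k' : ℕ) (hi' : i' ≤ n + 1) (hk' : k' ≤ n + 1) :=
    hω.sum_star_pow_mul_pow (hi'.trans_lt hn) (hk'.trans_lt hn)
  simp only [Matrix.sum_apply, phaseColumn_mul_mul_conjTranspose_apply, split, sum_add_distrib,
    ← sum_mul, orth i k (by omega) (by omega), orth i (k + 1) (by omega) (by omega),
    orth (i + 1) k (by omega) (by omega), Matrix.smul_apply, toeplitzSection_apply, smul_eq_mul]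
  split_ifs <;> first | omega | simp

end phaseColumn

theorem toeplitzSection_posSemidef_iff {M : ℕ} (T S : Matrix (Fin M) (Fin M) ℂ) :
    (∀ n, (ToeplitzSection M n T S).PosSemidef) ↔
      ∀ u : ℂ, ‖u‖ = 1 → (T + u • S + star u • Sᴴ).PosSemidef := by
  constructor
  · intro h u hu
    refine PosSemidef.of_forall_add_nsmul (B := T) fun n => ?_
    rw [← conjTranspose_phaseColumn_mul_toeplitzSection_mul hu]
    exact (h n).conjTranspose_mul_mul_same _
  · intro h n
    have hω := Complex.isPrimitiveRoot_exp (n + 2) (by omega)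
    have hN : (n : ℂ) + 2 ≠ 0 := by exact_mod_cast (by omega : n + 2 ≠ 0)
    have hsum : (((n + 2 : ℕ) : ℂ) • ToeplitzSection M n T S).PosSemidef := by
      rw [← sum_phaseColumn_mul_mul_conjTranspose hω (by omega)]
      refine posSemidef_sum _ fun j _ => (h _ ?_).mul_mul_conjTranspose_same _
      rw [norm_pow, hω.norm'_eq_one (by omega), one_pow]
    simpa [smul_smul, hN] using hsum.smul (a := ((n + 2 : ℕ) : ℂ)⁻¹) (by positivity)

lemma quadPos_iff_forall_norm_eq_one {M : ℕ} (P Q R : Matrix (Fin M) (Fin M) ℂ) :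
    QuadPos M P Q R ↔ ∀ (r : ℝ) (u : ℂ), ‖u‖ = 1 →
      (R + (r : ℂ) ^ 2 • P + u • ((r : ℂ) • Q) + star u • ((r : ℂ) • Q)ᴴ).PosSemidef := by
  have polar (r : ℝ) (u : ℂ) (hu : ‖u‖ = 1) :
      ((r * u) * (starRingEnd ℂ) (r * u)) • P + (r * u : ℂ) • Q + (starRingEnd ℂ) (r * u) • Qᴴ + R
        = R + (r : ℂ) ^ 2 • P + u • ((r : ℂ) • Q) + star u • ((r : ℂ) • Q)ᴴ := by
    have hu' : u * (starRingEnd ℂ) u = 1 := by simp [Complex.mul_conj', hu]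
    have hsq : (r * u) * (starRingEnd ℂ) (r * u) = (r : ℂ) ^ 2 := by
      rw [map_mul, Complex.conj_ofReal]
      linear_combination (r : ℂ) ^ 2 * hu'
    rw [hsq, map_mul, Complex.conj_ofReal, conjTranspose_smul, Complex.star_def,
      Complex.conj_ofReal]
    module
  constructor
  · intro h r u hu
    rw [← polar r u hu]
    exact h _
  · intro h z
    have := h ‖z‖ (Complex.exp (z.arg * Complex.I)) (Complex.norm_exp_ofReal_mul_I _)
    rwa [← polar _ _ (Complex.norm_exp_ofReal_mul_I _), Complex.norm_mul_exp_arg_mul_I] at this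

/-- `|z|² P + z Q + z̄ Qᴴ + R ≥ 0` for all `z ∈ ℂ` iff for every `r ∈ ℝ` and every
`n ≥ 0` the `(n+1) × (n+1)` block Toeplitz matrix with diagonal blocks `R + r² P`,
subdiagonal blocks `r Q`, superdiagonal blocks `r Qᴴ` and zeros elsewhere is positive
semidefinite. -/
theorem quadPos_iff_toeplitz (M : ℕ) (P Q R : Matrix (Fin M) (Fin M) ℂ) :
    QuadPos M P Q R ↔
      ∀ (r : ℝ) (n : ℕ),
        (ToeplitzSection M n (R + ((r : ℂ) ^ 2) • P) ((r : ℂ) • Q)).PosSemidef := by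
  rw [quadPos_iff_forall_norm_eq_one]
  exact forall_congr' fun r => (toeplitzSection_posSemidef_iff _ _).symm
end
end
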